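/- Let n ≥ 1, α ∈ ℝ, and let f : ℝⁿ → ℝ be locally integrable with finite Campanato norm ‖f‖_{E^{α,1}}. Let B = B(x₀,r) be a ball, x ∈ B, and t > 8r. Then ∫_{{y : 8r ≤ |x−y| < t}} r |f(y) − f_B| / |x−y|^{n} dy is at most c r^{1+α} log(t/r) ‖f‖_{E^{α,1}} if α < 0, at most c r (log(t/r))² ‖f‖_{E^{α,1}} if α = 0, and at most c r t^{α} log(t/r) ‖f‖_{E^{α,1}} if α > 0, with c depending only on n and α. -/

import Mathlib

open MeasureTheory Metric ENNReal

noncomputable def ballAvg (n : ℕ) (f : EuclideanSpace ℝ (Fin n) → ℝ)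
    (c : EuclideanSpace ℝ (Fin n)) (r : ℝ) : ℝ :=
  (volume (closedBall c r)).toReal⁻¹ * ∫ y in closedBall c r, f y

noncomputable def bmoNorm (n : ℕ) (f : EuclideanSpace ℝ (Fin n) → ℝ) : ℝ≥0∞ :=
  ⨆ (c : EuclideanSpace ℝ (Fin n)) (r : ℝ) (_ : 0 < r),
    ENNReal.ofReal ((volume (closedBall c r)).toReal⁻¹ *
      ∫ y in closedBall c r, |f y - ballAvg n f c r|)

noncomputable def campanatoNorm (n : ℕ) (α p : ℝ) (f : EuclideanSpace ℝ (Fin n) → ℝ) : ℝ≥0∞ :=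
  ⨆ (c : EuclideanSpace ℝ (Fin n)) (r : ℝ) (_ : 0 < r),
    ENNReal.ofReal ((volume (closedBall c r)).toReal ^ (-(α / n)) *
      ((volume (closedBall c r)).toReal⁻¹ *
        ∫ y in closedBall c r, |f y - ballAvg n f c r| ^ p) ^ (1 / p))

noncomputable def campanato1Norm (n : ℕ) (α : ℝ) (f : EuclideanSpace ℝ (Fin n) → ℝ) : ℝ≥0∞ :=
  ⨆ (c : EuclideanSpace ℝ (Fin n)) (r : ℝ) (_ : 0 < r),
    ENNReal.ofReal ((volume (closedBall c r)).toReal ^ (-(α / n)) *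
      ((volume (closedBall c r)).toReal⁻¹ *
        ∫ y in closedBall c r, |f y - ballAvg n f c r|))

noncomputable def lipNorm (n : ℕ) (γ : ℝ) (f : EuclideanSpace ℝ (Fin n) → ℝ) : ℝ≥0∞ :=
  ⨆ (x : EuclideanSpace ℝ (Fin n)) (y : EuclideanSpace ℝ (Fin n)) (_ : x ≠ y),
    ENNReal.ofReal (|f x - f y| / ‖x - y‖ ^ γ)

/-
Cut the region 8r ≤ |x - y| < t into the ≈ log₂(t/r) dyadic annuli
8r·2^k ≤ |x - y| < 8r·2^(k+1). On the k-th annulus the kernel r/|x - y|^n is at most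
r/(8r·2^k)^n, and the annulus lies in B_k = B(x₀, 2^(k+5) r), whose volume is 4^n (8r·2^k)^n
up to the unit-ball volume; so its contribution is r times the mean of |f - f_B| over B_k.
That mean is at most the Campanato oscillation of B_k plus |f_{B_k} - f_B|, and telescoping
along the doubling chain B ⊂ 2B ⊂ … ⊂ B_k bounds both together by
r^α ‖f‖ ∑_{j ≤ k+5} 2^(jα). This geometric sum is bounded for α < 0, equals k + 6 for
α = 0 and is ≲ (t/r)^α for α > 0; summing over the O(log(t/r)) annuli gives the three cases.
-/

open Finset

lemma two_pow_mul_rpow {r : ℝ} (hr : 0 ≤ r) (m : ℕ) (α : ℝ) :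
    ((2 : ℝ) ^ m * r) ^ α = r ^ α * ((2 : ℝ) ^ α) ^ m := by
  rw [Real.mul_rpow (by positivity) hr, ← Real.rpow_pow_comm zero_le_two, mul_comm]

lemma geom_sum_le_inv_one_sub {q : ℝ} (h0 : 0 ≤ q) (h1 : q < 1) (m : ℕ) :
    ∑ j ∈ range m, q ^ j ≤ (1 - q)⁻¹ := by
  have h := geom_sum_Ico_le_of_lt_one (m := 0) (n := m) h0 h1
  rwa [← range_eq_Ico, pow_zero, one_div] at h

lemma geom_sum_le_pow_div_sub_one {q : ℝ} (hq : 1 < q) (m : ℕ) :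
    ∑ j ∈ range m, q ^ j ≤ q ^ m / (q - 1) := by
  rw [geom_sum_eq hq.ne']
  gcongr
  linarith

lemma natCast_add_three_le_two_mul_log {r t : ℝ} (hr : 0 < r) {K : ℕ} (hK : 8 * r * 2 ^ K ≤ t) :
    (K : ℝ) + 3 ≤ 2 * Real.log (t / r) := by
  have hpow : (2 : ℝ) ^ (K + 3) ≤ t / r := by
    rw [le_div_iff₀ hr]; linarith [show (2 : ℝ) ^ (K + 3) * r = 8 * r * 2 ^ K by ring]
  have hlog := Real.log_le_log (by positivity) hpow
  rw [Real.log_pow] at hlog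
  have := Real.log_two_gt_d9
  push_cast at hlog
  nlinarith

lemma lintegral_biUnion_finset_le {X ι : Type*} [MeasurableSpace X] (μ : Measure X)
    (g : X → ℝ≥0∞) (s : Finset ι) (A : ι → Set X) :
    ∫⁻ y in ⋃ k ∈ s, A k, g y ∂μ ≤ ∑ k ∈ s, ∫⁻ y in A k, g y ∂μ := by
  classical
  induction s using Finset.induction with
  | empty => simp
  | insert a s h ih =>
    rw [Finset.set_biUnion_insert, Finset.sum_insert h]
    exact (lintegral_union_le _ _ _).trans (add_le_add_right ih _)

section DyadicAnnulus

variable {E : Type*} [NormedAddCommGroup E]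

def dyadicAnnulus (x : E) (ρ : ℝ) (k : ℕ) : Set E :=
  {y | ρ * 2 ^ k ≤ ‖x - y‖ ∧ ‖x - y‖ < ρ * 2 ^ (k + 1)}

lemma measurableSet_dyadicAnnulus [MeasurableSpace E] [OpensMeasurableSpace E] (x : E) (ρ : ℝ)
    (k : ℕ) : MeasurableSet (dyadicAnnulus x ρ k) :=
  (continuous_const.sub continuous_id).norm.measurable measurableSet_Ico

lemma dyadicAnnulus_subset_closedBall {x x₀ : E} {r : ℝ} (hx : x ∈ closedBall x₀ r) (ρ : ℝ)
    (k : ℕ) : dyadicAnnulus x ρ k ⊆ closedBall x₀ (ρ * 2 ^ (k + 1) + r) := fun y hy =>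
  calc dist y x₀ ≤ dist y x + dist x x₀ := dist_triangle y x x₀
    _ ≤ ρ * 2 ^ (k + 1) + r := by
      rw [dist_eq_norm, norm_sub_rev]
      exact add_le_add hy.2.le (mem_closedBall.1 hx)

lemma subset_biUnion_dyadicAnnulus (x : E) {ρ t : ℝ} (hρ : 0 < ρ) {K : ℕ}
    (ht : t ≤ ρ * 2 ^ (K + 1)) :
    {y | ρ ≤ ‖x - y‖ ∧ ‖x - y‖ < t} ⊆ ⋃ k ∈ range (K + 1), dyadicAnnulus x ρ k := by
  rintro y ⟨hρy, hyt⟩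
  obtain ⟨k, hk, hk'⟩ := exists_nat_pow_near ((one_le_div hρ).2 hρy) one_lt_two
  have hkK : (2 : ℝ) ^ k < 2 ^ (K + 1) :=
    hk.trans_lt ((div_lt_iff₀' hρ).2 (hyt.trans_le ht))
  refine Set.mem_biUnion
    (mem_range.2 ((pow_lt_pow_iff_right₀ (one_lt_two : (1 : ℝ) < 2)).1 hkK)) ⟨?_, ?_⟩
  · rwa [le_div_iff₀' hρ] at hk
  · rwa [div_lt_iff₀' hρ] at hk'

end DyadicAnnulus

noncomputable def unitBallVolume (n : ℕ) : ℝ :=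
  (volume (ball (0 : EuclideanSpace ℝ (Fin n)) 1)).toReal

lemma unitBallVolume_pos (n : ℕ) : 0 < unitBallVolume n :=
  ENNReal.toReal_pos (measure_ball_pos volume _ one_pos).ne' measure_ball_lt_top.ne

lemma volume_closedBall_toReal {n : ℕ} (c : EuclideanSpace ℝ (Fin n)) {ρ : ℝ} (hρ : 0 ≤ ρ) :
    (volume (closedBall c ρ)).toReal = unitBallVolume n * ρ ^ n := by
  rw [unitBallVolume, Measure.addHaar_closedBall volume c hρ, ENNReal.toReal_mul,
    ENNReal.toReal_ofReal (by positivity), finrank_euclideanSpace_fin, mul_comm]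

section Campanato

variable {n : ℕ} {α : ℝ} {f : EuclideanSpace ℝ (Fin n) → ℝ}

lemma abs_ballAvg_sub_le (hf : LocallyIntegrable f volume) (c : EuclideanSpace ℝ (Fin n))
    {ρ : ℝ} (hρ : 0 < ρ) (a : ℝ) :
    |ballAvg n f c ρ - a| ≤
      (volume (closedBall c ρ)).toReal⁻¹ * ∫ y in closedBall c ρ, |f y - a| := by
  have hV : (volume (closedBall c ρ)).toReal ≠ 0 :=
    (ENNReal.toReal_pos (measure_closedBall_pos volume c hρ).ne'
      measure_closedBall_lt_top.ne).ne'
  have hfB : IntegrableOn f (closedBall c ρ) volume :=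
    hf.integrableOn_isCompact (isCompact_closedBall c ρ)
  have hdiff : ballAvg n f c ρ - a =
      (volume (closedBall c ρ)).toReal⁻¹ * ∫ y in closedBall c ρ, (f y - a) := by
    rw [integral_sub hfB (integrableOn_const measure_closedBall_lt_top.ne), setIntegral_const,
      smul_eq_mul, measureReal_def, ballAvg]
    field_simp
  rw [hdiff, abs_mul, abs_inv, ENNReal.abs_toReal]
  gcongr
  exact abs_integral_le_integral_abs

lemma integral_abs_sub_ballAvg_le (hn : n ≠ 0) (hM : campanato1Norm n α f ≠ ⊤)
    (c : EuclideanSpace ℝ (Fin n)) {ρ : ℝ} (hρ : 0 < ρ) :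
    ∫ y in closedBall c ρ, |f y - ballAvg n f c ρ| ≤
      unitBallVolume n ^ (α / n) * ρ ^ α * (unitBallVolume n * ρ ^ n) *
        (campanato1Norm n α f).toReal := by
  set V := (volume (closedBall c ρ)).toReal
  set I := ∫ y in closedBall c ρ, |f y - ballAvg n f c ρ|
  have hVeq : V = unitBallVolume n * ρ ^ n := volume_closedBall_toReal c hρ.le
  have hV : 0 < V := hVeq ▸ mul_pos (unitBallVolume_pos n) (pow_pos hρ n)
  have hI : 0 ≤ I := integral_nonneg fun y => abs_nonneg _
  have hmean : V ^ (-(α / n)) * (V⁻¹ * I) ≤ (campanato1Norm n α f).toReal := by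
    have h : ENNReal.ofReal (V ^ (-(α / n)) * (V⁻¹ * I)) ≤ campanato1Norm n α f :=
      le_iSup_of_le c (le_iSup_of_le ρ (le_iSup_of_le hρ le_rfl))
    have h' := ENNReal.toReal_mono hM h
    rwa [ENNReal.toReal_ofReal (by positivity)] at h'
  have hVα : V ^ (α / n) = unitBallVolume n ^ (α / n) * ρ ^ α := by
    rw [hVeq, Real.mul_rpow (unitBallVolume_pos n).le (by positivity), ← Real.rpow_natCast,
      ← Real.rpow_mul hρ.le, mul_div_cancel₀ _ (Nat.cast_ne_zero.2 hn)]
  calc I = V ^ (α / n) * V * (V ^ (-(α / n)) * (V⁻¹ * I)) := by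
        rw [Real.rpow_neg hV.le]; field_simp
    _ ≤ V ^ (α / n) * V * (campanato1Norm n α f).toReal := by gcongr
    _ = _ := by rw [hVα, hVeq]

lemma abs_ballAvg_sub_ballAvg_two_mul_le (hn : n ≠ 0) (hf : LocallyIntegrable f volume)
    (hM : campanato1Norm n α f ≠ ⊤) (c : EuclideanSpace ℝ (Fin n)) {ρ : ℝ} (hρ : 0 < ρ) :
    |ballAvg n f c ρ - ballAvg n f c (2 * ρ)| ≤
      2 ^ n * unitBallVolume n ^ (α / n) * (2 * ρ) ^ α * (campanato1Norm n α f).toReal := by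
  set ω := unitBallVolume n
  have hω : 0 < ω := unitBallVolume_pos n
  have h2ρ : 0 < 2 * ρ := by positivity
  have hsub : ∫ y in closedBall c ρ, |f y - ballAvg n f c (2 * ρ)| ≤
      ∫ y in closedBall c (2 * ρ), |f y - ballAvg n f c (2 * ρ)| :=
    setIntegral_mono_set
      (((hf.integrableOn_isCompact (isCompact_closedBall c _)).sub
        (integrableOn_const measure_closedBall_lt_top.ne)).abs)
      (Filter.Eventually.of_forall fun y => abs_nonneg _)
      (closedBall_subset_closedBall (by linarith)).eventuallyLE
  calc |ballAvg n f c ρ - ballAvg n f c (2 * ρ)|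
      ≤ (ω * ρ ^ n)⁻¹ * ∫ y in closedBall c ρ, |f y - ballAvg n f c (2 * ρ)| := by
        rw [← volume_closedBall_toReal c hρ.le]; exact abs_ballAvg_sub_le hf c hρ _
    _ ≤ (ω * ρ ^ n)⁻¹ * (ω ^ (α / n) * (2 * ρ) ^ α * (ω * (2 * ρ) ^ n) *
          (campanato1Norm n α f).toReal) := by
        gcongr
        exact hsub.trans (integral_abs_sub_ballAvg_le hn hM c h2ρ)
    _ = _ := by rw [mul_pow]; field_simp

lemma abs_ballAvg_sub_ballAvg_two_pow_mul_le (hn : n ≠ 0) (hf : LocallyIntegrable f volume)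
    (hM : campanato1Norm n α f ≠ ⊤) (c : EuclideanSpace ℝ (Fin n)) {r : ℝ} (hr : 0 < r)
    (m : ℕ) :
    |ballAvg n f c r - ballAvg n f c (2 ^ m * r)| ≤
      2 ^ n * unitBallVolume n ^ (α / n) * r ^ α * (campanato1Norm n α f).toReal *
        ∑ j ∈ range m, ((2 : ℝ) ^ α) ^ (j + 1) := by
  induction m with
  | zero => simp
  | succ m ih =>
    have hstep := abs_ballAvg_sub_ballAvg_two_mul_le hn hf hM c (ρ := 2 ^ m * r) (by positivity)
    rw [← mul_assoc 2, ← pow_succ', two_pow_mul_rpow hr.le] at hstep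
    calc _ ≤ |ballAvg n f c r - ballAvg n f c (2 ^ m * r)| +
          |ballAvg n f c (2 ^ m * r) - ballAvg n f c (2 ^ (m + 1) * r)| := abs_sub_le _ _ _
      _ ≤ _ := by
        rw [sum_range_succ, mul_add]
        refine add_le_add ih (hstep.trans_eq ?_)
        ring

lemma integral_abs_sub_ballAvg_two_pow_mul_le (hn : n ≠ 0) (hf : LocallyIntegrable f volume)
    (hM : campanato1Norm n α f ≠ ⊤) (c : EuclideanSpace ℝ (Fin n)) {r : ℝ} (hr : 0 < r)
    (m : ℕ) :
    ∫ y in closedBall c (2 ^ m * r), |f y - ballAvg n f c r| ≤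
      (1 + 2 ^ n) * unitBallVolume n ^ (α / n) * r ^ α *
        (unitBallVolume n * (2 ^ m * r) ^ n) * (campanato1Norm n α f).toReal *
          ∑ j ∈ range (m + 1), ((2 : ℝ) ^ α) ^ j := by
  set ω := unitBallVolume n
  set M := (campanato1Norm n α f).toReal
  set V := ω * (2 ^ m * r) ^ n
  set a := ballAvg n f c (2 ^ m * r)
  set b := ballAvg n f c r
  set S := ∑ j ∈ range (m + 1), ((2 : ℝ) ^ α) ^ j
  have hmr : 0 < 2 ^ m * r := by positivity
  have hfB : IntegrableOn f (closedBall c (2 ^ m * r)) volume :=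
    hf.integrableOn_isCompact (isCompact_closedBall _ _)
  have hconst : IntegrableOn (fun _ => |a - b|) (closedBall c (2 ^ m * r)) volume :=
    integrableOn_const measure_closedBall_lt_top.ne
  have habs : IntegrableOn (fun y => |f y - a|) (closedBall c (2 ^ m * r)) volume :=
    (hfB.sub (integrableOn_const measure_closedBall_lt_top.ne)).abs
  have htriangle : ∫ y in closedBall c (2 ^ m * r), |f y - b| ≤
      (∫ y in closedBall c (2 ^ m * r), |f y - a|) + V * |a - b| := by
    calc _ ≤ ∫ y in closedBall c (2 ^ m * r), (|f y - a| + |a - b|) :=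
          integral_mono ((hfB.sub (integrableOn_const measure_closedBall_lt_top.ne)).abs)
            (habs.add hconst) fun y => abs_sub_le _ _ _
      _ = _ := by
          rw [integral_add habs hconst, setIntegral_const, smul_eq_mul, measureReal_def,
            volume_closedBall_toReal c hmr.le]
  have hgeom : ((2 : ℝ) ^ α) ^ m + 2 ^ n * ∑ j ∈ range m, ((2 : ℝ) ^ α) ^ (j + 1) ≤
      (1 + 2 ^ n) * S := by
    have hpos : ∀ j ∈ range (m + 1), 0 ≤ ((2 : ℝ) ^ α) ^ j := fun j _ => by positivity
    have h1 : ((2 : ℝ) ^ α) ^ m ≤ S := single_le_sum hpos (self_mem_range_succ m)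
    have h2 : ∑ j ∈ range m, ((2 : ℝ) ^ α) ^ (j + 1) ≤ S := by
      rw [show S = _ from sum_range_succ' _ m]; simp
    have h2n : (0 : ℝ) ≤ 2 ^ n := by positivity
    linarith [mul_le_mul_of_nonneg_left h2 h2n]
  have hω : 0 < ω := unitBallVolume_pos n
  calc ∫ y in closedBall c (2 ^ m * r), |f y - b|
      ≤ ω ^ (α / n) * (2 ^ m * r) ^ α * V * M +
          V * (2 ^ n * ω ^ (α / n) * r ^ α * M * ∑ j ∈ range m, ((2 : ℝ) ^ α) ^ (j + 1)) := by
        refine htriangle.trans (add_le_add (integral_abs_sub_ballAvg_le hn hM c hmr) ?_)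
        rw [abs_sub_comm]
        gcongr
        exact abs_ballAvg_sub_ballAvg_two_pow_mul_le hn hf hM c hr m
    _ = ω ^ (α / n) * r ^ α * V * M *
          (((2 : ℝ) ^ α) ^ m + 2 ^ n * ∑ j ∈ range m, ((2 : ℝ) ^ α) ^ (j + 1)) := by
        rw [two_pow_mul_rpow hr.le]; ring
    _ ≤ ω ^ (α / n) * r ^ α * V * M * ((1 + 2 ^ n) * S) := by gcongr
    _ = _ := by ring

end Campanato

noncomputable def annulusConst (n : ℕ) (α : ℝ) : ℝ :=
  4 ^ n * (1 + 2 ^ n) * unitBallVolume n ^ (α / n) * unitBallVolume n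

lemma annulusConst_pos (n : ℕ) (α : ℝ) : 0 < annulusConst n α := by
  have := unitBallVolume_pos n
  unfold annulusConst; positivity

noncomputable def annulusIntegral (n : ℕ) (f : EuclideanSpace ℝ (Fin n) → ℝ)
    (x₀ x : EuclideanSpace ℝ (Fin n)) (r t : ℝ) : ℝ≥0∞ :=
  ∫⁻ y in {y : EuclideanSpace ℝ (Fin n) | 8 * r ≤ ‖x - y‖ ∧ ‖x - y‖ < t},
    ENNReal.ofReal (r * |f y - ballAvg n f x₀ r| / ‖x - y‖ ^ (n : ℝ))

section AnnulusEstimate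

variable {n : ℕ} {α : ℝ} {f : EuclideanSpace ℝ (Fin n) → ℝ}

lemma lintegral_dyadicAnnulus_le (hn : n ≠ 0) (hf : LocallyIntegrable f volume)
    (hM : campanato1Norm n α f ≠ ⊤) {x₀ x : EuclideanSpace ℝ (Fin n)} {r : ℝ} (hr : 0 < r)
    (hx : x ∈ closedBall x₀ r) (k : ℕ) :
    ∫⁻ y in dyadicAnnulus x (8 * r) k,
        ENNReal.ofReal (r * |f y - ballAvg n f x₀ r| / ‖x - y‖ ^ (n : ℝ)) ≤
      ENNReal.ofReal (annulusConst n α * r * r ^ α * (campanato1Norm n α f).toReal *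
        ∑ j ∈ range (k + 6), ((2 : ℝ) ^ α) ^ j) := by
  set g := fun y => |f y - ballAvg n f x₀ r|
  set κ := r / (8 * r * 2 ^ k) ^ n
  set B := closedBall x₀ (2 ^ (k + 5) * r)
  have hsub : dyadicAnnulus x (8 * r) k ⊆ B := by
    refine (dyadicAnnulus_subset_closedBall hx _ k).trans (closedBall_subset_closedBall ?_)
    have : r ≤ r * 2 ^ (k + 1) := le_mul_of_one_le_right hr.le (one_le_pow₀ one_le_two)
    linarith [show (2 : ℝ) ^ (k + 5) * r = 8 * r * 2 ^ (k + 1) + 8 * (r * 2 ^ (k + 1)) by ring]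
  have hg : IntegrableOn g B volume :=
    ((hf.integrableOn_isCompact (isCompact_closedBall _ _)).sub
      (integrableOn_const measure_closedBall_lt_top.ne)).abs
  have hpointwise : ∀ y ∈ dyadicAnnulus x (8 * r) k,
      ENNReal.ofReal (r * g y / ‖x - y‖ ^ (n : ℝ)) ≤ ENNReal.ofReal (κ * g y) := by
    rintro y ⟨hy, -⟩
    refine ENNReal.ofReal_le_ofReal ?_
    have : 0 < 8 * r * 2 ^ k := by positivity
    calc r * g y / ‖x - y‖ ^ (n : ℝ) ≤ r * g y / (8 * r * 2 ^ k) ^ n := by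
          rw [Real.rpow_natCast]; gcongr
      _ = κ * g y := by ring
  have hκ : κ * (unitBallVolume n * (2 ^ (k + 5) * r) ^ n) = 4 ^ n * r * unitBallVolume n := by
    have : 0 < 8 * r * 2 ^ k := by positivity
    rw [show (2 : ℝ) ^ (k + 5) * r = 4 * (8 * r * 2 ^ k) by ring, mul_pow]
    simp only [κ]
    field_simp
  calc ∫⁻ y in dyadicAnnulus x (8 * r) k, ENNReal.ofReal (r * g y / ‖x - y‖ ^ (n : ℝ))
      ≤ ∫⁻ y in dyadicAnnulus x (8 * r) k, ENNReal.ofReal (κ * g y) :=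
        setLIntegral_mono' (measurableSet_dyadicAnnulus _ _ _) hpointwise
    _ ≤ ∫⁻ y in B, ENNReal.ofReal (κ * g y) := lintegral_mono_set hsub
    _ = ENNReal.ofReal (κ * ∫ y in B, g y) := by
        rw [← integral_const_mul, ofReal_integral_eq_lintegral_ofReal (hg.const_mul κ)
          (Filter.Eventually.of_forall fun y => by positivity)]
    _ ≤ _ := by
        refine ENNReal.ofReal_le_ofReal ((mul_le_mul_of_nonneg_left
          (integral_abs_sub_ballAvg_two_pow_mul_le hn hf hM x₀ hr (k + 5)) (by positivity)).trans
          (le_of_eq ?_))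
        unfold annulusConst
        linear_combination ((1 + 2 ^ n) * unitBallVolume n ^ (α / n) * r ^ α *
          (campanato1Norm n α f).toReal * ∑ j ∈ range (k + 6), ((2 : ℝ) ^ α) ^ j) * hκ

lemma annulusIntegral_le_of_le_two_pow (hn : n ≠ 0) (hf : LocallyIntegrable f volume)
    (hM : campanato1Norm n α f ≠ ⊤) {x₀ x : EuclideanSpace ℝ (Fin n)} {r t : ℝ} (hr : 0 < r)
    (hx : x ∈ closedBall x₀ r) {K : ℕ} (ht : t ≤ 8 * r * 2 ^ (K + 1)) :
    annulusIntegral n f x₀ x r t ≤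
      ENNReal.ofReal (annulusConst n α * r * r ^ α * (campanato1Norm n α f).toReal *
        ((K + 1) * ∑ j ∈ range (K + 6), ((2 : ℝ) ^ α) ^ j)) := by
  set X := annulusConst n α * r * r ^ α * (campanato1Norm n α f).toReal *
    ∑ j ∈ range (K + 6), ((2 : ℝ) ^ α) ^ j
  have hX : 0 ≤ X := by have := annulusConst_pos n α; positivity
  have hterm : ∀ k ∈ range (K + 1), ∫⁻ y in dyadicAnnulus x (8 * r) k,
      ENNReal.ofReal (r * |f y - ballAvg n f x₀ r| / ‖x - y‖ ^ (n : ℝ)) ≤ ENNReal.ofReal X := by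
    intro k hk
    refine (lintegral_dyadicAnnulus_le hn hf hM hr hx k).trans (ENNReal.ofReal_le_ofReal ?_)
    have := annulusConst_pos n α
    simp only [X]
    gcongr
    exact Nat.lt_succ_iff.1 (mem_range.1 hk)
  calc _ ≤ ∫⁻ y in ⋃ k ∈ range (K + 1), dyadicAnnulus x (8 * r) k,
          ENNReal.ofReal (r * |f y - ballAvg n f x₀ r| / ‖x - y‖ ^ (n : ℝ)) :=
        lintegral_mono_set (subset_biUnion_dyadicAnnulus x (by positivity) ht)
    _ ≤ ∑ k ∈ range (K + 1), ENNReal.ofReal X :=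
        (lintegral_biUnion_finset_le _ _ _ _).trans (sum_le_sum hterm)
    _ = ENNReal.ofReal ((K + 1) * X) := by
        rw [sum_const, card_range, nsmul_eq_mul, ← ENNReal.ofReal_natCast,
          ← ENNReal.ofReal_mul (Nat.cast_nonneg _), Nat.cast_succ]
    _ = _ := by congr 1; ring

lemma exists_annulusIntegral_le (hn : n ≠ 0) (hf : LocallyIntegrable f volume)
    (hM : campanato1Norm n α f ≠ ⊤) {x₀ x : EuclideanSpace ℝ (Fin n)} {r t : ℝ} (hr : 0 < r)
    (hx : x ∈ closedBall x₀ r) (ht : 8 * r < t) :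
    ∃ K : ℕ, (K : ℝ) + 3 ≤ 2 * Real.log (t / r) ∧ (2 : ℝ) ^ (K + 5) ≤ 4 * (t / r) ∧
      annulusIntegral n f x₀ x r t ≤
        ENNReal.ofReal (annulusConst n α * r * r ^ α * (campanato1Norm n α f).toReal *
          ((K + 1) * ∑ j ∈ range (K + 6), ((2 : ℝ) ^ α) ^ j)) := by
  have h8r : 0 < 8 * r := by positivity
  obtain ⟨K, hK, hK'⟩ := exists_nat_pow_near ((one_le_div h8r).2 ht.le) one_lt_two
  rw [le_div_iff₀' h8r] at hK
  rw [div_lt_iff₀' h8r] at hK'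
  refine ⟨K, natCast_add_three_le_two_mul_log hr hK, ?_,
    annulusIntegral_le_of_le_two_pow hn hf hM hr hx hK'.le⟩
  rw [mul_div_assoc', le_div_iff₀ hr]
  linarith [show (2 : ℝ) ^ (K + 5) * r = 4 * (8 * r * 2 ^ K) by ring]

lemma annulusIntegral_le_of_neg (hn : n ≠ 0) (hf : LocallyIntegrable f volume)
    (hM : campanato1Norm n α f ≠ ⊤) {x₀ x : EuclideanSpace ℝ (Fin n)} {r t : ℝ} (hr : 0 < r)
    (hx : x ∈ closedBall x₀ r) (ht : 8 * r < t) (hα : α < 0) :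
    annulusIntegral n f x₀ x r t ≤
      ENNReal.ofReal (2 * annulusConst n α * (1 - (2 : ℝ) ^ α)⁻¹ * r ^ (1 + α) *
        Real.log (t / r) * (campanato1Norm n α f).toReal) := by
  obtain ⟨K, hKL, -, hI⟩ := exists_annulusIntegral_le hn hf hM hr hx ht
  refine hI.trans (ENNReal.ofReal_le_ofReal ?_)
  have hS : ∑ j ∈ range (K + 6), ((2 : ℝ) ^ α) ^ j ≤ (1 - (2 : ℝ) ^ α)⁻¹ :=
    geom_sum_le_inv_one_sub (by positivity) (Real.rpow_lt_one_of_one_lt_of_neg one_lt_two hα) _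
  have := annulusConst_pos n α
  have hK1 : (K : ℝ) + 1 ≤ 2 * Real.log (t / r) := by linarith
  calc _ ≤ annulusConst n α * r * r ^ α * (campanato1Norm n α f).toReal *
        (2 * Real.log (t / r) * (1 - (2 : ℝ) ^ α)⁻¹) := by
        gcongr
        linarith
    _ = _ := by rw [Real.rpow_add hr, Real.rpow_one]; ring

lemma annulusIntegral_le_of_eq_zero (hn : n ≠ 0) (hf : LocallyIntegrable f volume)
    (hM : campanato1Norm n 0 f ≠ ⊤) {x₀ x : EuclideanSpace ℝ (Fin n)} {r t : ℝ} (hr : 0 < r)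
    (hx : x ∈ closedBall x₀ r) (ht : 8 * r < t) :
    annulusIntegral n f x₀ x r t ≤
      ENNReal.ofReal (8 * annulusConst n 0 * r * Real.log (t / r) ^ 2 *
        (campanato1Norm n 0 f).toReal) := by
  obtain ⟨K, hKL, -, hI⟩ := exists_annulusIntegral_le hn hf hM hr hx ht
  refine hI.trans (ENNReal.ofReal_le_ofReal ?_)
  have hKK : ((K : ℝ) + 1) * (K + 6) ≤ 8 * Real.log (t / r) ^ 2 := by nlinarith
  have := annulusConst_pos n 0
  simp only [Real.rpow_zero, one_pow, sum_const, card_range, nsmul_eq_mul, mul_one]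
  push_cast
  calc _ ≤ annulusConst n 0 * r * (campanato1Norm n 0 f).toReal *
        (8 * Real.log (t / r) ^ 2) := by gcongr
    _ = _ := by ring

lemma annulusIntegral_le_of_pos (hn : n ≠ 0) (hf : LocallyIntegrable f volume)
    (hM : campanato1Norm n α f ≠ ⊤) {x₀ x : EuclideanSpace ℝ (Fin n)} {r t : ℝ} (hr : 0 < r)
    (hx : x ∈ closedBall x₀ r) (ht : 8 * r < t) (hα : 0 < α) :
    annulusIntegral n f x₀ x r t ≤
      ENNReal.ofReal (2 * 4 ^ α * ((2 : ℝ) ^ α / ((2 : ℝ) ^ α - 1)) * annulusConst n α * r *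
        t ^ α * Real.log (t / r) * (campanato1Norm n α f).toReal) := by
  obtain ⟨K, hKL, hKt, hI⟩ := exists_annulusIntegral_le hn hf hM hr hx ht
  refine hI.trans (ENNReal.ofReal_le_ofReal ?_)
  have hq : 1 < (2 : ℝ) ^ α := Real.one_lt_rpow one_lt_two hα
  have hS : ∑ j ∈ range (K + 6), ((2 : ℝ) ^ α) ^ j ≤
      (4 * (t / r)) ^ α * ((2 : ℝ) ^ α / ((2 : ℝ) ^ α - 1)) :=
    calc _ ≤ ((2 : ℝ) ^ α) ^ (K + 6) / ((2 : ℝ) ^ α - 1) := geom_sum_le_pow_div_sub_one hq _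
      _ = ((2 : ℝ) ^ (K + 5)) ^ α * ((2 : ℝ) ^ α / ((2 : ℝ) ^ α - 1)) := by
        rw [← Real.rpow_pow_comm zero_le_two, pow_succ]; ring
      _ ≤ _ := by gcongr
  have := annulusConst_pos n α
  have hK1 : (K : ℝ) + 1 ≤ 2 * Real.log (t / r) := by linarith
  calc _ ≤ annulusConst n α * r * r ^ α * (campanato1Norm n α f).toReal *
        (2 * Real.log (t / r) * ((4 * (t / r)) ^ α * ((2 : ℝ) ^ α / ((2 : ℝ) ^ α - 1)))) := by
        gcongr
        linarith
    _ = _ := by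
        have : 0 < t := by linarith
        rw [Real.mul_rpow (by norm_num) (by positivity), Real.div_rpow (by positivity) hr.le]
        field_simp

end AnnulusEstimate

/-- annulus integral of r |f - f_B| / |x-y|^{n} (the case β = 1). -/
theorem stmt7 (n : ℕ) (hn : 1 ≤ n) (α : ℝ) :
    ∃ c > (0 : ℝ), ∀ f : EuclideanSpace ℝ (Fin n) → ℝ, LocallyIntegrable f volume →
      campanato1Norm n α f < ⊤ →
    ∀ (x₀ x : EuclideanSpace ℝ (Fin n)) (r t : ℝ), 0 < r → x ∈ closedBall x₀ r →
      8 * r < t →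
      ((α < 0 →
        ∫⁻ y in {y : EuclideanSpace ℝ (Fin n) | 8 * r ≤ ‖x - y‖ ∧ ‖x - y‖ < t},
            ENNReal.ofReal (r * |f y - ballAvg n f x₀ r| / ‖x - y‖ ^ (n : ℝ)) ≤
          ENNReal.ofReal (c * r ^ (1 + α) * Real.log (t / r) *
            (campanato1Norm n α f).toReal)) ∧
      (α = 0 →
        ∫⁻ y in {y : EuclideanSpace ℝ (Fin n) | 8 * r ≤ ‖x - y‖ ∧ ‖x - y‖ < t},
            ENNReal.ofReal (r * |f y - ballAvg n f x₀ r| / ‖x - y‖ ^ (n : ℝ)) ≤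
          ENNReal.ofReal (c * r * Real.log (t / r) ^ 2 *
            (campanato1Norm n α f).toReal)) ∧
      (0 < α →
        ∫⁻ y in {y : EuclideanSpace ℝ (Fin n) | 8 * r ≤ ‖x - y‖ ∧ ‖x - y‖ < t},
            ENNReal.ofReal (r * |f y - ballAvg n f x₀ r| / ‖x - y‖ ^ (n : ℝ)) ≤
          ENNReal.ofReal (c * r * t ^ α * Real.log (t / r) *
            (campanato1Norm n α f).toReal))) := by
  have hn0 : n ≠ 0 := Nat.one_le_iff_ne_zero.mp hn
  have hC := annulusConst_pos n α
  rcases lt_trichotomy α 0 with hα | rfl | hα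
  · have hq : (2 : ℝ) ^ α < 1 := Real.rpow_lt_one_of_one_lt_of_neg one_lt_two hα
    have : 0 < (1 - (2 : ℝ) ^ α)⁻¹ := inv_pos.2 (by linarith)
    refine ⟨2 * annulusConst n α * (1 - (2 : ℝ) ^ α)⁻¹, by positivity, ?_⟩
    intro f hf hM x₀ x r t hr hx ht
    exact ⟨fun _ => annulusIntegral_le_of_neg hn0 hf hM.ne hr hx ht hα,
      fun h => absurd h hα.ne, fun h => absurd h hα.not_gt⟩
  · refine ⟨8 * annulusConst n 0, by positivity, ?_⟩
    intro f hf hM x₀ x r t hr hx ht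
    exact ⟨fun h => absurd h (lt_irrefl 0),
      fun _ => annulusIntegral_le_of_eq_zero hn0 hf hM.ne hr hx ht, fun h => absurd h (lt_irrefl 0)⟩
  · have hq : 1 < (2 : ℝ) ^ α := Real.one_lt_rpow one_lt_two hα
    have : 0 < (2 : ℝ) ^ α / ((2 : ℝ) ^ α - 1) := div_pos (by linarith) (by linarith)
    refine ⟨2 * 4 ^ α * ((2 : ℝ) ^ α / ((2 : ℝ) ^ α - 1)) * annulusConst n α, by positivity, ?_⟩
    intro f hf hM x₀ x r t hr hx ht
    exact ⟨fun h => absurd h hα.not_gt, fun h => absurd h hα.ne',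
      fun _ => annulusIntegral_le_of_pos hn0 hf hM.ne hr hx ht hα⟩
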